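/- Let (F_n) and (G_k) be totally disjoint sequences of filters on X with equal contours, and Δ := {(n,k) : F_n # G_k}. Then for almost all n, F_n = ⋂_{k ∈ Δn} (F_n ⊔ G_k), and symmetrically for almost all k, G_k = ⋂_{n ∈ Δ⁻¹k} (F_n ⊔ G_k). -/
import Mathlib


open Filter

/-- The contour (set-theoretic lower limit) of a sequence of filters:
`A ∈ contourSeq F` iff `A ∈ F n` for all sufficiently large `n`. -/
def contourSeq {X : Type*} (F : ℕ → Filter X) : Filter X := Filter.atTop.bind F

/-- Two filters mesh (`#`) if every member of the first intersects every member of the second. -/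
def Mesh {X : Type*} (F G : Filter X) : Prop := ∀ A ∈ F, ∀ B ∈ G, (A ∩ B).Nonempty

/-- A sequence of filters is totally disjoint if there are pairwise disjoint sets `A n ∈ F n`. -/
def TotallyDisjoint {X : Type*} (F : ℕ → Filter X) : Prop :=
  ∃ A : ℕ → Set X, (∀ n, A n ∈ F n) ∧ Pairwise fun m n => Disjoint (A m) (A n)

lemma mem_contourSeq {X : Type*} {F : ℕ → Filter X} {s : Set X} :
    s ∈ contourSeq F ↔ ∃ m, ∀ n ≥ m, s ∈ F n := by
  rw [contourSeq, Filter.mem_bind]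
  constructor
  · rintro ⟨t, ht, hts⟩
    obtain ⟨m, hm⟩ := Filter.mem_atTop_sets.mp ht
    exact ⟨m, fun n hn => hts n (hm n hn)⟩
  · rintro ⟨m, hm⟩
    exact ⟨Set.Ici m, Filter.Ici_mem_atTop m, fun n hn => hm n hn⟩

lemma mesh_comm {X : Type*} {F G : Filter X} : Mesh F G ↔ Mesh G F := by
  constructor <;>
  · intro hm A hA B hB
    rw [Set.inter_comm]
    exact hm B hB A hA

lemma filters_recovered_main {X : Type*} (F G : ℕ → Filter X)
    (hF : TotallyDisjoint F) (hG : TotallyDisjoint G)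
    (h : contourSeq F = contourSeq G) :
    {n | F n ≠ ⨆ k ∈ {k | Mesh (F n) (G k)}, F n ⊓ G k}.Finite := by
  classical
  by_contra hinf
  obtain ⟨A, hA, hApd⟩ := hF
  obtain ⟨B, hB, hBpd⟩ := hG
  set Bad : Set ℕ := {n | F n ≠ ⨆ k ∈ {k | Mesh (F n) (G k)}, F n ⊓ G k} with hBadDef
  -- Step 1: extract witnesses from badness
  have hwit : ∀ n ∈ Bad, ∃ D : Set X, D ⊆ A n ∧ (∀ s ∈ F n, (s ∩ D).Nonempty) ∧
      ∀ k, ∃ t ∈ F n, ∃ u ∈ G k, t ∩ u ∩ D = ∅ := by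
    intro n hn
    have hle : (⨆ k ∈ {k | Mesh (F n) (G k)}, F n ⊓ G k) ≤ F n :=
      iSup₂_le fun k _ => inf_le_left
    have hnle : ¬ F n ≤ ⨆ k ∈ {k | Mesh (F n) (G k)}, F n ⊓ G k :=
      fun hl => hn (le_antisymm hl hle)
    rw [Filter.le_def] at hnle
    push_neg at hnle
    obtain ⟨C, hC, hCn⟩ := hnle
    have hCk : ∀ k, Mesh (F n) (G k) → C ∈ F n ⊓ G k := by
      intro k hk
      simp only [Filter.mem_iSup] at hC
      exact hC k hk
    refine ⟨A n ∩ Cᶜ, Set.inter_subset_left, ?_, ?_⟩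
    · intro s hs
      by_contra hemp
      rw [Set.not_nonempty_iff_eq_empty] at hemp
      apply hCn
      apply Filter.mem_of_superset (Filter.inter_mem hs (hA n))
      intro x hx
      by_contra hxC
      have : x ∈ s ∩ (A n ∩ Cᶜ) := ⟨hx.1, hx.2, hxC⟩
      rw [hemp] at this
      exact this
    · intro k
      by_cases hk : Mesh (F n) (G k)
      · obtain ⟨t, ht, u, hu, hCeq⟩ := Filter.mem_inf_iff.mp (hCk k hk)
        refine ⟨t, ht, u, hu, ?_⟩
        ext x
        simp only [Set.mem_inter_iff, Set.mem_compl_iff, Set.mem_empty_iff_false, iff_false,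
          not_and, hCeq]
        tauto
      · unfold Mesh at hk
        push_neg at hk
        obtain ⟨t, ht, u, hu, hne⟩ := hk
        exact ⟨t, ht, u, hu, by rw [hne, Set.empty_inter]⟩
  choose! D hDsub hDmesh hDk using hwit
  choose! t ht u hu htu using hDk
  -- Step 2: tail unions from the contour equality
  have hTcol : ∀ j : ℕ, ∃ N, ∀ n ≥ N, (⋃ (k) (_ : j < k), B k) ∈ F n := by
    intro j
    have hc : (⋃ (k) (_ : j < k), B k) ∈ contourSeq G :=
      mem_contourSeq.mpr ⟨j + 1, fun k hk =>
        Filter.mem_of_superset (hB k) (Set.subset_iUnion₂ (s := fun k _ => B k) k hk)⟩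
    rw [← h] at hc
    exact mem_contourSeq.mp hc
  choose nseq hnseq using hTcol
  have hTrow : ∀ i : ℕ, ∃ K, ∀ k ≥ K, (⋃ (m) (_ : i < m), A m) ∈ G k := by
    intro i
    have hc : (⋃ (m) (_ : i < m), A m) ∈ contourSeq F :=
      mem_contourSeq.mpr ⟨i + 1, fun m hm =>
        Filter.mem_of_superset (hA m) (Set.subset_iUnion₂ (s := fun m _ => A m) m hm)⟩
    rw [h] at hc
    exact mem_contourSeq.mp hc
  choose kseq hkseq using hTrow
  -- Step 3: the diagonal set S
  set φ : ℕ → ℕ := fun k => max (nseq k) k with hφ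
  set ubar : ℕ → ℕ → Set X := fun n k =>
    if kseq n ≤ k then (⋃ (m) (_ : n < m), A m) else u n k with hubar
  set uk : ℕ → Set X := fun k =>
    B k ∩ ⋂ n ∈ Finset.range (φ k + 1), (if n ∈ Bad then ubar n k else Set.univ) with hukdef
  have hukmem : ∀ k, uk k ∈ G k := by
    intro k
    apply Filter.inter_mem (hB k)
    rw [Filter.biInter_finset_mem]
    intro n _
    by_cases hb : n ∈ Bad
    · rw [if_pos hb]
      by_cases hks : kseq n ≤ k
      · simp only [hubar, if_pos hks]
        exact hkseq n k hks
      · simp only [hubar, if_neg hks]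
        exact hu n hb k
    · rw [if_neg hb]
      exact Filter.univ_mem
  set S : Set X := ⋃ k, uk k with hSdef
  have hS : S ∈ contourSeq G :=
    mem_contourSeq.mpr ⟨0, fun k _ =>
      Filter.mem_of_superset (hukmem k) (Set.subset_iUnion uk k)⟩
  rw [← h] at hS
  obtain ⟨m₀, hm₀⟩ := mem_contourSeq.mp hS
  -- Step 4: pick a large bad n
  have hBadInf : Bad.Infinite := hinf
  obtain ⟨n, hnBad, hnlt⟩ := hBadInf.exists_gt (max m₀ (nseq 0))
  set J : Finset ℕ := (Finset.range n).filter (fun k => φ k < n) with hJ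
  have h0J : 0 ∈ J := by
    have h0n : 0 < n := lt_of_le_of_lt (Nat.zero_le _) hnlt
    have hφ0 : φ 0 < n := by
      have : nseq 0 ≤ max m₀ (nseq 0) := le_max_right _ _
      have h1 : nseq 0 < n := lt_of_le_of_lt this hnlt
      simp only [hφ]
      exact max_lt h1 h0n
    exact Finset.mem_filter.mpr ⟨Finset.mem_range.mpr h0n, hφ0⟩
  set j : ℕ := J.max' ⟨0, h0J⟩ with hjdef
  have hjJ : j ∈ J := J.max'_mem _
  have hφj : φ j < n := (Finset.mem_filter.mp hjJ).2
  have hTj : (⋃ (k) (_ : j < k), B k) ∈ F n := by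
    apply hnseq j n
    have : nseq j ≤ φ j := le_max_left _ _
    omega
  have htstar : (⋂ k ∈ Finset.range (kseq n), t n k) ∈ F n := by
    rw [Filter.biInter_finset_mem]
    exact fun k _ => ht n hnBad k
  have hSF : S ∈ F n := hm₀ n (le_of_lt (lt_of_le_of_lt (le_max_left _ _) hnlt))
  have hW : (S ∩ ((⋃ (k) (_ : j < k), B k) ∩ ⋂ k ∈ Finset.range (kseq n), t n k)) ∈ F n :=
    Filter.inter_mem hSF (Filter.inter_mem hTj htstar)
  obtain ⟨x, hxW, hxD⟩ := hDmesh n hnBad _ hW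
  obtain ⟨hxS, hxT, hxt⟩ := hxW
  obtain ⟨k, hxuk⟩ := Set.mem_iUnion.mp hxS
  have hxBk : x ∈ B k := hxuk.1
  obtain ⟨k', hk'mem⟩ := Set.mem_iUnion.mp hxT
  obtain ⟨hjk', hxBk'⟩ := Set.mem_iUnion.mp hk'mem
  have hkk' : k = k' := by
    by_contra hne
    exact Set.disjoint_left.mp (hBpd hne) hxBk hxBk'
  have hjk : j < k := hkk' ▸ hjk'
  have hnφ : n ≤ φ k := by
    by_contra hlt
    push_neg at hlt
    have hkn : k < n := lt_of_le_of_lt (le_max_right _ _) hlt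
    have hkJ : k ∈ J := Finset.mem_filter.mpr ⟨Finset.mem_range.mpr hkn, hlt⟩
    exact absurd (J.le_max' k hkJ) (not_le.mpr hjk)
  have hxub : x ∈ ubar n k := by
    have h2 := hxuk.2
    have hmem : x ∈ (if n ∈ Bad then ubar n k else Set.univ) := by
      have hrange : n ∈ Finset.range (φ k + 1) := Finset.mem_range.mpr (Nat.lt_succ_of_le hnφ)
      exact Set.mem_iInter₂.mp h2 n hrange
    rwa [if_pos hnBad] at hmem
  by_cases hks : kseq n ≤ k
  · rw [hubar] at hxub
    simp only [if_pos hks] at hxub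
    obtain ⟨m, hm'⟩ := Set.mem_iUnion.mp hxub
    obtain ⟨hnm, hxAm⟩ := Set.mem_iUnion.mp hm'
    have hxAn : x ∈ A n := hDsub n hnBad hxD
    exact Set.disjoint_left.mp (hApd (Nat.ne_of_gt hnm)) hxAm hxAn
  · rw [hubar] at hxub
    simp only [if_neg hks] at hxub
    have hxtk : x ∈ t n k := by
      have hkr : k ∈ Finset.range (kseq n) := Finset.mem_range.mpr (not_le.mp hks)
      exact Set.mem_iInter₂.mp hxt k hkr
    have : x ∈ t n k ∩ u n k ∩ D n := ⟨⟨hxtk, hxub⟩, hxD⟩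
    rw [htu n hnBad k] at this
    exact this

theorem filters_recovered_from_joins {X : Type*} (F G : ℕ → Filter X)
    (hF : TotallyDisjoint F) (hG : TotallyDisjoint G)
    (h : contourSeq F = contourSeq G) :
    {n | F n ≠ ⨆ k ∈ {k | Mesh (F n) (G k)}, F n ⊓ G k}.Finite ∧
      {k | G k ≠ ⨆ n ∈ {n | Mesh (F n) (G k)}, F n ⊓ G k}.Finite := by
  refine ⟨filters_recovered_main F G hF hG h, ?_⟩
  have h2 := filters_recovered_main G F hG hF h.symm
  have hset : {k | G k ≠ ⨆ n ∈ {n | Mesh (F n) (G k)}, F n ⊓ G k} =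
      {k | G k ≠ ⨆ n ∈ {n | Mesh (G k) (F n)}, G k ⊓ F n} := by
    ext k
    have hkey : ∀ n : ℕ, (⨆ (_ : Mesh (F n) (G k)), F n ⊓ G k) =
        ⨆ (_ : Mesh (G k) (F n)), G k ⊓ F n := fun n => by
      rw [inf_comm]
      exact iSup_congr_Prop mesh_comm (fun _ => rfl)
    simp only [Set.mem_setOf_eq]
    rw [iSup_congr hkey]
  rw [hset]
  exact h2
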